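/- For the Sierpiński–Knopp curve s : [0,1] → Δ, the image of every dyadic interval [k/2ⁿ, (k+1)/2ⁿ] (0 ≤ k < 2ⁿ) is an isosceles right triangle similar to Δ with similarity ratio 2^{-n/2}, hence of area 2^{-n}. -/

import Mathlib

open Set MeasureTheory

noncomputable def pt (x y : ℝ) : EuclideanSpace ℝ (Fin 2) := WithLp.toLp 2 ![x, y]

/-- The Sierpiński–Knopp curve: a continuous surjection of `[0,1]` onto the isosceles
right triangle with vertices `(0,0)`, `(2,0)`, `(1,1)`, whose two halves are images
of the whole curve under similarities with ratio `1/√2`, mapping onto the two half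
triangles. -/
def IsSierpinskiKnopp (s : ℝ → EuclideanSpace ℝ (Fin 2)) : Prop :=
  ContinuousOn s (Icc 0 1) ∧
  s '' Icc 0 1 = convexHull ℝ {pt 0 0, pt 2 0, pt 1 1} ∧
  s '' Icc 0 (1/2) = convexHull ℝ {pt 0 0, pt 1 0, pt 1 1} ∧
  s '' Icc (1/2) 1 = convexHull ℝ {pt 1 0, pt 1 1, pt 2 0} ∧
  s 0 = pt 0 0 ∧ s (1/2) = pt 1 1 ∧ s 1 = pt 2 0 ∧
  ∃ f₀ f₁ : EuclideanSpace ℝ (Fin 2) → EuclideanSpace ℝ (Fin 2),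
    (∀ x y, dist (f₀ x) (f₀ y) = dist x y / Real.sqrt 2) ∧
    (∀ x y, dist (f₁ x) (f₁ y) = dist x y / Real.sqrt 2) ∧
    (∀ t ∈ Icc (0:ℝ) 1, s (t / 2) = f₀ (s t)) ∧
    (∀ t ∈ Icc (0:ℝ) 1, s ((t + 1) / 2) = f₁ (s t))

open scoped RealInnerProductSpace Pointwise ENNReal

section Aux

abbrev E2 := EuclideanSpace ℝ (Fin 2)

lemma sim_struct (f : E2 → E2) (hf : ∀ x y, dist (f x) (f y) = dist x y / Real.sqrt 2) :
    ∃ L : E2 ≃ₗᵢ[ℝ] E2, ∀ x, f x = (Real.sqrt 2)⁻¹ • L x + f 0 := by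
  have h2 : (0:ℝ) < Real.sqrt 2 := Real.sqrt_pos.2 (by norm_num)
  set g : E2 → E2 := fun x => Real.sqrt 2 • (f x - f 0) with hg
  have hnorm : ∀ x y, ‖g x - g y‖ = ‖x - y‖ := by
    intro x y
    have : g x - g y = Real.sqrt 2 • (f x - f y) := by
      simp only [hg]; module
    rw [this, norm_smul, Real.norm_eq_abs, abs_of_pos h2, ← dist_eq_norm, hf, ← dist_eq_norm]
    field_simp
  have hn : ∀ x, ‖g x‖ = ‖x‖ := by
    intro x
    have := hnorm x 0
    simpa [hg] using this
  have hinner : ∀ x y, ⟪g x, g y⟫ = ⟪x, y⟫ := by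
    intro x y
    rw [real_inner_eq_norm_mul_self_add_norm_mul_self_sub_norm_sub_mul_self_div_two,
      real_inner_eq_norm_mul_self_add_norm_mul_self_sub_norm_sub_mul_self_div_two (x := x),
      hn, hn, hnorm]
  have hadd : ∀ x y, g (x + y) = g x + g y := by
    intro x y
    have h0 : ⟪g (x+y) - (g x + g y), g (x+y) - (g x + g y)⟫ = 0 := by
      simp only [inner_sub_left, inner_sub_right, inner_add_left, inner_add_right, hinner]
      ring
    have := inner_self_eq_zero.1 h0
    linear_combination (norm := module) this
  have hsmul : ∀ (c : ℝ) (x : E2), g (c • x) = c • g x := by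
    intro c x
    have h0 : ⟪g (c • x) - c • g x, g (c • x) - c • g x⟫ = 0 := by
      simp only [inner_sub_left, inner_sub_right, real_inner_smul_left,
        real_inner_smul_right, hinner]
      ring
    have := inner_self_eq_zero.1 h0
    linear_combination (norm := module) this
  let Li : E2 →ₗᵢ[ℝ] E2 :=
    LinearMap.isometryOfInner { toFun := g, map_add' := hadd, map_smul' := hsmul } hinner
  refine ⟨Li.toLinearIsometryEquiv rfl, fun x => ?_⟩
  have hLix : (Li.toLinearIsometryEquiv rfl) x = g x := rfl
  rw [hLix, hg]
  simp only [smul_smul, inv_mul_cancel₀ (ne_of_gt h2), one_smul]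
  abel

lemma sim_vol (f : E2 → E2) (hf : ∀ x y, dist (f x) (f y) = dist x y / Real.sqrt 2)
    (A : Set E2) : volume (f '' A) = 2⁻¹ * volume A := by
  obtain ⟨L, hL⟩ := sim_struct f hf
  have h2 : (0:ℝ) < Real.sqrt 2 := Real.sqrt_pos.2 (by norm_num)
  have himg : f '' A = (fun v => v + f 0) '' ((Real.sqrt 2)⁻¹ • (L '' A)) := by
    rw [← image_smul, image_image, image_image]
    exact image_congr fun x _ => hL x
  have hLA : volume (L '' A) = volume A := by
    rw [show (L '' A) = L.symm ⁻¹' A from by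
      ext x; exact ⟨fun ⟨y, hy, e⟩ => by simpa [← e] using hy, fun h => ⟨_, h, L.apply_symm_apply x⟩⟩]
    exact L.symm.measurePreserving.measure_preimage_emb
      L.symm.toHomeomorph.measurableEmbedding A
  rw [himg, image_add_right, measure_preimage_add_right, Measure.addHaar_smul, hLA,
    finrank_euclideanSpace_fin]
  congr 1
  rw [abs_of_pos (by positivity), inv_pow, Real.sq_sqrt (by norm_num : (2:ℝ) ≥ 0)]
  rw [ENNReal.ofReal_inv_of_pos (by norm_num)]
  norm_num

lemma sim_hull (f : E2 → E2) (hf : ∀ x y, dist (f x) (f y) = dist x y / Real.sqrt 2)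
    (A B C : E2) :
    f '' convexHull ℝ {A, B, C} = convexHull ℝ {f A, f B, f C} := by
  obtain ⟨L, hL⟩ := sim_struct f hf
  let F : E2 →ᵃ[ℝ] E2 := AffineMap.mk' f ((Real.sqrt 2)⁻¹ • (L : E2 →ₗ[ℝ] E2)) 0
    (fun p => by simpa using hL p)
  have hF : ⇑F = f := rfl
  have := F.image_convexHull ({A, B, C} : Set E2)
  rw [hF] at this
  rw [this]
  congr 1
  simp [image_insert_eq]

lemma pt_apply0 (x y : ℝ) : pt x y 0 = x := rfl
lemma pt_apply1 (x y : ℝ) : pt x y 1 = y := rfl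

def T0 : Set E2 := {p | 0 ≤ p 1 ∧ p 1 ≤ p 0 ∧ p 0 ≤ 1}
def T0' : Set E2 := {p | 0 ≤ p 0 ∧ p 0 ≤ p 1 ∧ p 1 ≤ 1}

lemma hull_eq_T0 : convexHull ℝ ({pt 0 0, pt 1 0, pt 1 1} : Set E2) = T0 := by
  apply le_antisymm
  · apply convexHull_min
    · rintro p (rfl | rfl | rfl) <;>
        simp [T0, pt_apply0, pt_apply1, pt] <;> norm_num
    · have h1 : Convex ℝ {p : E2 | 0 ≤ p 1} :=
        convex_halfSpace_ge (⟨fun a b => rfl, fun c a => rfl⟩ : IsLinearMap ℝ fun p : E2 => p 1) 0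
      have h2 : Convex ℝ {p : E2 | p 1 - p 0 ≤ 0} :=
        convex_halfSpace_le ⟨fun a b => by simp [sub_eq_add_neg]; ring, fun c a => by
          simp; ring⟩ 0
      have h3 : Convex ℝ {p : E2 | p 0 ≤ 1} :=
        convex_halfSpace_le (⟨fun a b => rfl, fun c a => rfl⟩ : IsLinearMap ℝ fun p : E2 => p 0) 1
      have : T0 = {p : E2 | 0 ≤ p 1} ∩ ({p | p 1 - p 0 ≤ 0} ∩ {p | p 0 ≤ 1}) := by
        ext p; simp [T0, sub_nonpos, and_assoc]
      rw [this]
      exact h1.inter (h2.inter h3)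
  · rintro p ⟨h1, h2, h3⟩
    have hmem : ∀ q ∈ ({pt 0 0, pt 1 0, pt 1 1} : Set E2),
        q ∈ convexHull ℝ ({pt 0 0, pt 1 0, pt 1 1} : Set E2) := fun q hq => subset_convexHull _ _ hq
    have hcvx : Convex ℝ (convexHull ℝ ({pt 0 0, pt 1 0, pt 1 1} : Set E2)) := convex_convexHull _ _
    have key : p = (1 - p 0) • pt 0 0 + (p 0 - p 1) • pt 1 0 + p 1 • pt 1 1 := by
      refine PiLp.ext fun i => ?_
      fin_cases i <;>
        simp [pt, PiLp.add_apply, PiLp.smul_apply, Matrix.cons_val_zero, Matrix.cons_val_one] <;>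
        ring
    have hsum : p = ∑ i : Fin 3, (![1 - p 0, p 0 - p 1, p 1] i) • (![pt 0 0, pt 1 0, pt 1 1] i) := by
      rw [Fin.sum_univ_three]
      simpa using key
    rw [hsum]
    refine hcvx.sum_mem (fun i _ => ?_) ?_ (fun i _ => ?_)
    · fin_cases i <;> simp <;> linarith
    · rw [Fin.sum_univ_three]; simp only [Matrix.cons_val_zero, Matrix.cons_val_one,
        Matrix.head_cons, Matrix.cons_val_two, Matrix.tail_cons]; ring
    · fin_cases i <;> exact hmem _ (by simp)

/-- coordinate swap as a linear isometry equiv -/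
noncomputable def sw : E2 ≃ₗᵢ[ℝ] E2 :=
  (LinearIsometryEquiv.piLpCongrLeft 2 ℝ ℝ (Equiv.swap (0 : Fin 2) 1))

lemma vol_T0' : volume T0' = volume T0 := by
  have himg : ⇑sw '' T0 = T0' := by
    ext p
    constructor
    · rintro ⟨q, ⟨h1, h2, h3⟩, rfl⟩
      have e0 : sw q 0 = q 1 := by
        simp [sw, LinearIsometryEquiv.piLpCongrLeft_symm, LinearIsometryEquiv.piLpCongrLeft_apply, Equiv.piCongrLeft'_apply, Equiv.swap_apply_def]
      have e1 : sw q 1 = q 0 := by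
        simp [sw, LinearIsometryEquiv.piLpCongrLeft_symm, LinearIsometryEquiv.piLpCongrLeft_apply, Equiv.piCongrLeft'_apply, Equiv.swap_apply_def]
      exact ⟨by rw [e0]; exact h1, by rw [e0, e1]; exact h2, by rw [e1]; exact h3⟩
    · rintro ⟨h1, h2, h3⟩
      refine ⟨sw.symm p, ?_, by simp⟩
      have e0 : sw.symm p 0 = p 1 := by
        simp [sw, LinearIsometryEquiv.piLpCongrLeft_symm, LinearIsometryEquiv.piLpCongrLeft_apply, Equiv.piCongrLeft'_apply, Equiv.swap_apply_def]
      have e1 : sw.symm p 1 = p 0 := by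
        simp [sw, LinearIsometryEquiv.piLpCongrLeft_symm, LinearIsometryEquiv.piLpCongrLeft_apply, Equiv.piCongrLeft'_apply, Equiv.swap_apply_def]
      exact ⟨by rw [e1]; exact h1, by rw [e0, e1]; exact h2, by rw [e0]; exact h3⟩
  rw [← himg, show (⇑sw '' T0) = sw.symm ⁻¹' T0 from by
      ext x; exact ⟨fun ⟨y, hy, e⟩ => by simpa [← e] using hy, fun h => ⟨_, h, sw.apply_symm_apply x⟩⟩]
  exact sw.symm.measurePreserving.measure_preimage_emb
    sw.symm.toHomeomorph.measurableEmbedding T0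

lemma diag_null : volume {p : E2 | p 0 = p 1} = 0 := by
  let ℓ : E2 →ₗ[ℝ] ℝ :=
    { toFun := fun p => p 0 - p 1
      map_add' := fun a b => by simp [PiLp.add_apply]; ring
      map_smul' := fun c a => by simp [PiLp.smul_apply]; ring }
  have hset : {p : E2 | p 0 = p 1} = (LinearMap.ker ℓ : Set E2) := by
    ext p; simp [ℓ, LinearMap.mem_ker, sub_eq_zero]
  rw [hset]
  refine Measure.addHaar_submodule _ _ (fun htop => ?_)
  have : (EuclideanSpace.single 0 (1:ℝ) : E2) ∈ LinearMap.ker ℓ := htop ▸ Submodule.mem_top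
  simp [ℓ, LinearMap.mem_ker, EuclideanSpace.single_apply] at this

lemma sq_vol : volume {p : E2 | ∀ i, p i ∈ Icc (0:ℝ) 1} = 1 := by
  have h := (EuclideanSpace.volume_preserving_symm_measurableEquiv_toLp (Fin 2)).measure_preimage
    (s := univ.pi fun _ => Icc (0:ℝ) 1)
    (MeasurableSet.univ_pi (fun i => measurableSet_Icc)).nullMeasurableSet
  have hset : (MeasurableEquiv.toLp 2 (Fin 2 → ℝ)).symm ⁻¹' (univ.pi fun _ => Icc (0:ℝ) 1)
      = {p : E2 | ∀ i, p i ∈ Icc (0:ℝ) 1} := by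
    ext p; simp [Set.mem_pi, Pi.le_def, forall_and]
  rw [hset] at h
  rw [h, volume_pi_pi]
  simp [Real.volume_Icc]

lemma vol_T0 : volume T0 = 2⁻¹ := by
  have hT0closed : IsClosed T0 := by
    have c0 : Continuous fun p : E2 => p 0 := by fun_prop
    have c1 : Continuous fun p : E2 => p 1 := by fun_prop
    exact (isClosed_le continuous_const c1).inter
      ((isClosed_le c1 c0).inter (isClosed_le c0 continuous_const))
  have hmeas : MeasurableSet T0 := hT0closed.measurableSet
  have hunion : T0' ∪ T0 = {p : E2 | ∀ i, p i ∈ Icc (0:ℝ) 1} := by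
    ext p
    constructor
    · rintro (⟨h1, h2, h3⟩ | ⟨h1, h2, h3⟩) <;>
        · intro i
          fin_cases i <;> constructor <;> simp <;> linarith
    · intro h
      have h0 := h 0; have h1 := h 1
      rcases le_total (p 0) (p 1) with hle | hle
      · exact Or.inl ⟨h0.1, hle, h1.2⟩
      · exact Or.inr ⟨h1.1, hle, h0.2⟩
  have hinter : volume (T0' ∩ T0) = 0 := by
    refine measure_mono_null (fun p hp => ?_) diag_null
    exact le_antisymm hp.1.2.1 hp.2.2.1
  have key := measure_union_add_inter₀ (μ := volume) T0' hmeas.nullMeasurableSet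
  rw [hunion, hinter, add_zero, sq_vol, vol_T0'] at key
  have h : (2:ℝ≥0∞) * volume T0 = 2 * 2⁻¹ := by
    rw [two_mul, ← key, ENNReal.mul_inv_cancel (by norm_num) (by norm_num)]
  exact (ENNReal.mul_right_inj (by norm_num) (by norm_num)).1 h

lemma image_half (a b : ℝ) : (fun t : ℝ => t / 2) '' Icc a b = Icc (a/2) (b/2) := by
  ext x
  simp only [mem_image, mem_Icc]
  constructor
  · rintro ⟨t, ⟨ht1, ht2⟩, rfl⟩
    constructor <;> linarith
  · rintro ⟨h1, h2⟩
    exact ⟨2*x, ⟨by linarith, by linarith⟩, by ring⟩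

lemma image_half1 (a b : ℝ) : (fun t : ℝ => (t + 1) / 2) '' Icc a b = Icc ((a+1)/2) ((b+1)/2) := by
  ext x
  simp only [mem_image, mem_Icc]
  constructor
  · rintro ⟨t, ⟨ht1, ht2⟩, rfl⟩
    constructor <;> linarith
  · rintro ⟨h1, h2⟩
    exact ⟨2*x - 1, ⟨by linarith, by linarith⟩, by ring⟩

lemma sub01 (n k : ℕ) (hk : k < 2^n) :
    Icc ((k:ℝ)/2^n) (((k:ℝ)+1)/2^n) ⊆ Icc (0:ℝ) 1 := by
  have h2 : (0:ℝ) < 2^n := by positivity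
  apply Icc_subset_Icc (by positivity)
  rw [div_le_one h2]
  have : (k:ℝ) + 1 ≤ 2^n := by exact_mod_cast Nat.succ_le_of_lt hk
  linarith

lemma dist_pt (a b c d : ℝ) : dist (pt a b) (pt c d) = Real.sqrt ((a-c)^2 + (b-d)^2) := by
  rw [EuclideanSpace.dist_eq]
  congr 1
  simp [Fin.sum_univ_two, Real.dist_eq, sq_abs, pt]

end Aux

theorem stmt_11 (s : ℝ → EuclideanSpace ℝ (Fin 2)) (hs : IsSierpinskiKnopp s)
    (n k : ℕ) (hk : k < 2 ^ n) :
    ∃ A B C : EuclideanSpace ℝ (Fin 2),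
      s '' Icc ((k : ℝ) / 2 ^ n) ((k + 1 : ℝ) / 2 ^ n) = convexHull ℝ {A, B, C} ∧
      dist A C = Real.sqrt 2 * (Real.sqrt 2)⁻¹ ^ n ∧
      dist B C = Real.sqrt 2 * (Real.sqrt 2)⁻¹ ^ n ∧
      dist A B = 2 * (Real.sqrt 2)⁻¹ ^ n ∧
      volume (convexHull ℝ ({A, B, C} : Set (EuclideanSpace ℝ (Fin 2)))) = 2⁻¹ ^ n := by
  obtain ⟨-, hIm, hHalf0, -, -, -, -, f₀, f₁, hf₀, hf₁, he₀, he₁⟩ := hs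
  have hs2 : (0:ℝ) < Real.sqrt 2 := Real.sqrt_pos.2 (by norm_num)
  -- the volume of the full triangle is 1
  have hvolD : volume (convexHull ℝ ({pt 0 0, pt 2 0, pt 1 1} :
      Set (EuclideanSpace ℝ (Fin 2)))) = 1 := by
    have himD0 : f₀ '' (s '' Icc 0 1) = s '' Icc 0 (1/2) := by
      calc f₀ '' (s '' Icc 0 1) = (fun t => f₀ (s t)) '' Icc 0 1 := image_image f₀ s _
        _ = (fun t => s (t / 2)) '' Icc 0 1 := image_congr fun t ht => (he₀ t ht).symm
        _ = s '' ((fun t : ℝ => t / 2) '' Icc 0 1) := (image_image s _ _).symm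
        _ = s '' Icc 0 (1/2) := by rw [image_half]; norm_num
    have h1 : volume (f₀ '' (s '' Icc 0 1)) = 2⁻¹ * volume (s '' Icc 0 1) := sim_vol f₀ hf₀ _
    rw [himD0, hHalf0, hull_eq_T0, vol_T0, hIm] at h1
    have h2 : (2⁻¹ : ℝ≥0∞) * 1 = 2⁻¹ * volume (convexHull ℝ
        ({pt 0 0, pt 2 0, pt 1 1} : Set (EuclideanSpace ℝ (Fin 2)))) := by
      rw [mul_one]; exact h1
    exact ((ENNReal.mul_right_inj (by norm_num) (by norm_num)).1 h2).symm
  induction n generalizing k with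
  | zero =>
    obtain rfl : k = 0 := Nat.lt_one_iff.1 (by simpa using hk)
    refine ⟨pt 0 0, pt 2 0, pt 1 1, ?_, ?_, ?_, ?_, ?_⟩
    · rw [show ((0:ℕ):ℝ)/2^0 = 0 by norm_num, show (((0:ℕ):ℝ)+1)/2^0 = 1 by norm_num]
      exact hIm
    · rw [dist_pt, pow_zero, mul_one]
      norm_num
    · rw [dist_pt, pow_zero, mul_one]
      norm_num
    · rw [dist_pt, pow_zero, mul_one]
      rw [show ((0:ℝ)-2)^2 + (0-0)^2 = 2^2 by norm_num, Real.sqrt_sq (by norm_num)]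
    · rw [pow_zero]
      exact hvolD
  | succ n IH =>
    rcases lt_or_ge k (2^n) with hklt | hkge
    · obtain ⟨A, B, C, him, h1, h2, h3, hv⟩ := IH k hklt
      have e1 : (k:ℝ)/2^(n+1) = ((k:ℝ)/2^n)/2 := by
        rw [div_div, ← pow_succ]
      have e2 : ((k:ℝ)+1)/2^(n+1) = (((k:ℝ)+1)/2^n)/2 := by
        rw [div_div, ← pow_succ]
      have himg : s '' Icc ((k:ℝ)/2^(n+1)) (((k:ℝ)+1)/2^(n+1))
          = f₀ '' (s '' Icc ((k:ℝ)/2^n) (((k:ℝ)+1)/2^n)) := by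
        calc s '' Icc ((k:ℝ)/2^(n+1)) (((k:ℝ)+1)/2^(n+1))
            = (fun t => s (t / 2)) '' Icc ((k:ℝ)/2^n) (((k:ℝ)+1)/2^n) := by
              rw [e1, e2, ← image_half, image_image]
          _ = (fun t => f₀ (s t)) '' Icc ((k:ℝ)/2^n) (((k:ℝ)+1)/2^n) :=
              image_congr fun t ht => he₀ t (sub01 n k hklt ht)
          _ = f₀ '' (s '' Icc ((k:ℝ)/2^n) (((k:ℝ)+1)/2^n)) := (image_image f₀ s _).symm
      refine ⟨f₀ A, f₀ B, f₀ C, ?_, ?_, ?_, ?_, ?_⟩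
      · rw [himg, him, sim_hull f₀ hf₀]
      · rw [hf₀, h1, pow_succ, div_eq_mul_inv]
        ring
      · rw [hf₀, h2, pow_succ, div_eq_mul_inv]
        ring
      · rw [hf₀, h3, pow_succ, div_eq_mul_inv]
        ring
      · rw [← sim_hull f₀ hf₀, sim_vol f₀ hf₀, hv, pow_succ, mul_comm]
    · set j := k - 2^n with hj
      have hjk : j + 2^n = k := Nat.sub_add_cancel hkge
      have hjlt : j < 2^n := by
        have : k < 2^n * 2 := by rw [← pow_succ]; exact hk
        omega
      have hkj : (k:ℝ) = (j:ℝ) + 2^n := by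
        rw [← hjk]; push_cast; ring
      obtain ⟨A, B, C, him, h1, h2, h3, hv⟩ := IH j hjlt
      have h2n : (0:ℝ) < 2^n := by positivity
      have e1 : (k:ℝ)/2^(n+1) = ((j:ℝ)/2^n + 1)/2 := by
        rw [hkj, pow_succ]
        field_simp
      have e2 : ((k:ℝ)+1)/2^(n+1) = (((j:ℝ)+1)/2^n + 1)/2 := by
        rw [hkj, pow_succ]
        field_simp
        ring
      have himg : s '' Icc ((k:ℝ)/2^(n+1)) (((k:ℝ)+1)/2^(n+1))
          = f₁ '' (s '' Icc ((j:ℝ)/2^n) (((j:ℝ)+1)/2^n)) := by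
        calc s '' Icc ((k:ℝ)/2^(n+1)) (((k:ℝ)+1)/2^(n+1))
            = (fun t => s ((t + 1) / 2)) '' Icc ((j:ℝ)/2^n) (((j:ℝ)+1)/2^n) := by
              rw [e1, e2, ← image_half1, image_image]
          _ = (fun t => f₁ (s t)) '' Icc ((j:ℝ)/2^n) (((j:ℝ)+1)/2^n) :=
              image_congr fun t ht => he₁ t (sub01 n j hjlt ht)
          _ = f₁ '' (s '' Icc ((j:ℝ)/2^n) (((j:ℝ)+1)/2^n)) := (image_image f₁ s _).symm
      refine ⟨f₁ A, f₁ B, f₁ C, ?_, ?_, ?_, ?_, ?_⟩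
      · rw [himg, him, sim_hull f₁ hf₁]
      · rw [hf₁, h1, pow_succ, div_eq_mul_inv]
        ring
      · rw [hf₁, h2, pow_succ, div_eq_mul_inv]
        ring
      · rw [hf₁, h3, pow_succ, div_eq_mul_inv]
        ring
      · rw [← sim_hull f₁ hf₁, sim_vol f₁ hf₁, hv, pow_succ, mul_comm]
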